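/- Let F₀, F₁ : ℝ → ℝ be differentiable with F₀ convex and F₁ concave. Then for all a, b ∈ ℝ, (F₀'(a) + F₁'(b)) (a − b) ≥ (F₀(a) + F₁(a)) − (F₀(b) + F₁(b)). -/
import Mathlib

lemma tangent_le_aux (F : ℝ → ℝ) (hd : Differentiable ℝ F)
    (h : ConvexOn ℝ Set.univ F) (x y : ℝ) :
    F x + deriv F x * (y - x) ≤ F y := by
  rcases lt_trichotomy x y with hxy | hxy | hxy
  · have hs := h.deriv_le_slope (Set.mem_univ x) (Set.mem_univ y) hxy (hd x)
    rw [slope_def_field] at hs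
    have hpos : (0:ℝ) < y - x := by linarith
    have := (le_div_iff₀ hpos).mp hs
    linarith
  · simp [hxy]
  · have hs := h.slope_le_deriv (Set.mem_univ y) (Set.mem_univ x) hxy (hd x)
    rw [slope_def_field] at hs
    have hpos : (0:ℝ) < x - y := by linarith
    have := (div_le_iff₀ hpos).mp hs
    nlinarith

theorem convex_concave_splitting (F₀ F₁ : ℝ → ℝ)
    (hF₀d : Differentiable ℝ F₀) (hF₁d : Differentiable ℝ F₁)
    (hF₀ : ConvexOn ℝ Set.univ F₀) (hF₁ : ConcaveOn ℝ Set.univ F₁)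
    (a b : ℝ) :
    (deriv F₀ a + deriv F₁ b) * (a - b) ≥ (F₀ a + F₁ a) - (F₀ b + F₁ b) := by
  have h0 := tangent_le_aux F₀ hF₀d hF₀ a b
  have h1 := tangent_le_aux (fun x => -F₁ x) hF₁d.neg hF₁.neg b a
  have hderiv : deriv (fun x => -F₁ x) b = -deriv F₁ b := deriv.neg
  rw [hderiv] at h1
  have h1' : -F₁ b + -deriv F₁ b * (a - b) ≤ -F₁ a := h1
  nlinarith
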